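/- For each n ≥ 0, the assignment a_u ↦ Σ_{(x₁,…,x_{k_u}) ∈ X₁ᵘ×⋯×X_{k_u}ᵘ} a_{v(x₁,…,x_{k_u})} for u ∈ E_n^{0,0} (where C^n_u = {X₁ᵘ,…,X_{k_u}ᵘ}) and a_w ↦ a_w for w ∈ E_n^{0,1} extends to a well-defined injective monoid homomorphism ι_n : M(E_n,C^n) → M(E_{n+1},C^{n+1}). -/

import Mathlib

/-- A bipartite separated graph: all edges go from a vertex of `V1 = E^{0,1}` to a
vertex of `V0 = E^{0,0}`, and `C v` is a family of subsets of `r⁻¹(v)`. -/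
structure BSG where
  V0 : Type
  V1 : Type
  E : Type
  s : E → V1
  r : E → V0
  C : V0 → Set (Set E)

/-- Being a finite bipartite separated graph. -/
structure BSG.Valid (G : BSG) : Prop where
  finV0 : Finite G.V0
  finV1 : Finite G.V1
  finE : Finite G.E
  mem_r : ∀ v X, X ∈ G.C v → ∀ e ∈ X, G.r e = v
  nonempty_class : ∀ v X, X ∈ G.C v → X.Nonempty
  disj : ∀ v, (G.C v).PairwiseDisjoint id
  cover : ∀ e : G.E, ∃ X ∈ G.C (G.r e), e ∈ X
  C_nonempty : ∀ v : G.V0, (G.C v).Nonempty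
  s_surj : Function.Surjective G.s

/-- The set of new vertices `v(x₁,…,x_{k_u})` of the graph `(E₁, C¹)`: pairs of a
vertex `u ∈ E^{0,0}` and a choice of one edge from each class of `C_u`. -/
def BSG.NewVert (G : BSG) : Type :=
  Σ u : G.V0, (X : {X : Set G.E // X ∈ G.C u}) → ↥X.1

/-- The set of edges of `(E₁, C¹)`: an edge `α^{xᵢ}(x₁,…,x̂ᵢ,…,x_{k_u})` is encoded as
the pair of its source vertex `v(x₁,…,x_{k_u})` and the class containing `xᵢ`. -/
def BSG.NewEdge (G : BSG) : Type :=
  Σ p : G.NewVert, {X : Set G.E // X ∈ G.C p.1}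

/-- The edge `xᵢ ∈ E¹` attached to an edge `α^{xᵢ}(…)` of `(E₁,C¹)`. -/
def BSG.edgeOf (G : BSG) (e : G.NewEdge) : G.E := (e.1.2 e.2 : G.E)

/-- The class `X(x) = {α^{x}(…)} ⊆ E₁¹` attached to an edge `x ∈ E¹`. -/
def BSG.Xof (G : BSG) (x : G.E) : Set G.NewEdge := {e | G.edgeOf e = x}

/-- The finite bipartite separated graph `(E₁, C¹)` associated to `(E,C)`:
`E₁^{0,0} = E^{0,1}`, `E₁^{0,1}` is the set of new vertices `v(x₁,…,x_{k_u})`, the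
edge `α^{xᵢ}(…)` has source `v(x₁,…,x_{k_u})` and range `s(xᵢ)`, and
`C¹_w = {X(x) : x ∈ s⁻¹(w)}`. -/
def BSG.next (G : BSG) : BSG where
  V0 := G.V1
  V1 := G.NewVert
  E := G.NewEdge
  s := fun e => e.1
  r := fun e => G.s (G.edgeOf e)
  C := fun w => {S | ∃ x : G.E, G.s x = w ∧ S = G.Xof x}

/-- The defining relations of the graph monoid `M(E,C)` of a bipartite separated
graph: `a_v = Σ_{e∈X} a_{s(e)}` for every `v ∈ E^{0,0}` and every `X ∈ C_v`. -/
def BipRel (H : BSG) {N : Type} [AddCommMonoid N] (a : H.V0 ⊕ H.V1 → N) : Prop :=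
  ∀ v : H.V0, ∀ Y ∈ H.C v, a (Sum.inl v) = ∑ᶠ e ∈ Y, a (Sum.inr (H.s e))

/-- `(M, a)` is the graph monoid `M(E,C)` of the bipartite separated graph `H`. -/
def IsBipGraphMonoid (H : BSG) {M : Type} [AddCommMonoid M] (a : H.V0 ⊕ H.V1 → M) : Prop :=
  BipRel H a ∧ ∀ (N : Type) [AddCommMonoid N] (b : H.V0 ⊕ H.V1 → N), BipRel H b →
    ∃! φ : M →+ N, ∀ p, φ (a p) = b p

/-!
Both graph monoids are quotients of free commutative monoids. The substitution
`a_u ↦ Σ_{p over u} a_p`, `a_w ↦ a_w` respects the relations of `M(E,C)`: for `X ∈ C_u` the new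
vertices over `u` are partitioned by their `X`-coordinate, and the new vertices having `x` as a
coordinate are the sources of the class `X(x)`, whose relation reads `a_{s(x)} = Σ_{p ∋ x} a_p`.

For injectivity, read `β + Σ_{y ∈ ν} Σ_{p ∋ y} a_p` (with `β` supported on `E^{0,1}` and `ν` a
multiset of edges) back as `β + Σ_{y ∈ ν} a_{s(y)} ∈ M(E,C)`. This does not depend on `ν`: if
every new vertex through `x` is covered by `ν` but `x ∉ ν`, then some class `B ∈ C_{r(x)}` avoiding
`x` lies inside `ν` (otherwise a new vertex through `x` could avoid `ν` in all other coordinates),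
and exchanging `B` for the class of `x` changes neither the covered new vertices nor, by a
relation of `M(E,C)`, the value read back. The reading is invariant under the relations of
`M(E₁,C¹)` and reads `ι(m)` back as `m`.
-/

namespace Multiset

variable {α β N : Type*} [AddCommMonoid N]

def sumMapAddMonoidHom (f : α → N) : Multiset α →+ N :=
  sumAddMonoidHom.comp (mapAddMonoidHom f)

@[simp]
lemma sumMapAddMonoidHom_apply (f : α → N) (s : Multiset α) :
    sumMapAddMonoidHom f s = (s.map f).sum := rfl

lemma addMonoidHom_apply_map (φ : Multiset β →+ N) (f : α → β) (s : Multiset α) :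
    φ (s.map f) = (s.map fun a => φ {f a}).sum := by
  rw [← sum_map_singleton (s.map f), map_multiset_sum, map_map, map_map]
  rfl

@[simp]
lemma filterMap_getLeft?_map_inr (s : Multiset β) :
    (s.map (Sum.inr : β → α ⊕ β)).filterMap Sum.getLeft? = 0 :=
  eq_zero_of_forall_notMem fun a h => by simp [mem_filterMap] at h

@[simp]
lemma filterMap_getRight?_map_inr (s : Multiset β) :
    (s.map (Sum.inr : β → α ⊕ β)).filterMap Sum.getRight? = s := by
  rw [filterMap_map]
  exact filterMap_some s

@[simp]
lemma filterMap_getLeft?_singleton_inl (a : α) :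
    ({Sum.inl a} : Multiset (α ⊕ β)).filterMap Sum.getLeft? = {a} := rfl

@[simp]
lemma filterMap_getRight?_singleton_inl (a : α) :
    ({Sum.inl a} : Multiset (α ⊕ β)).filterMap Sum.getRight? = 0 := rfl

end Multiset

theorem IsBipGraphMonoid.exists_addEquiv {H : BSG} {M N : Type} [AddCommMonoid M]
    [AddCommMonoid N] {a : H.V0 ⊕ H.V1 → M} {b : H.V0 ⊕ H.V1 → N}
    (ha : IsBipGraphMonoid H a) (hb : IsBipGraphMonoid H b) :
    ∃ e : M ≃+ N, ∀ p, e (a p) = b p := by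
  obtain ⟨f, hf, -⟩ := ha.2 N b hb.1
  obtain ⟨g, hg, -⟩ := hb.2 M a ha.1
  have hgf : g.comp f = .id M := (ha.2 M a ha.1).unique (by simp [hf, hg]) (by simp)
  have hfg : f.comp g = .id N := (hb.2 N b hb.1).unique (by simp [hf, hg]) (by simp)
  exact ⟨f.toAddEquiv g hgf hfg, hf⟩

namespace BSG

section Presentation

variable (H : BSG)

abbrev FreeMon : Type := Multiset (H.V0 ⊕ H.V1)

def sourceSum : Multiset H.E →+ H.FreeMon := Multiset.mapAddMonoidHom fun e => .inr (H.s e)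

variable {H} in
lemma sourceSum_apply (ν : Multiset H.E) : H.sourceSum ν = ν.map fun e => .inr (H.s e) := rfl

variable {H} in
lemma map_inr_add_sourceSum_cons (β : Multiset H.V1) (x : H.E) (ν : Multiset H.E) :
    β.map .inr + H.sourceSum (x ::ₘ ν) = (β + {H.s x}).map .inr + H.sourceSum ν := by
  rw [sourceSum_apply, sourceSum_apply, Multiset.map_cons, ← Multiset.singleton_add,
    Multiset.map_add, Multiset.map_singleton]
  abel

variable [Finite H.E]

def relCon : AddCon H.FreeMon :=
  addConGen fun a b => ∃ v, ∃ Y ∈ H.C v, a = {.inl v} ∧ b = H.sourceSum Y.toFinite.toFinset.val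

abbrev GraphMonoid : Type := H.relCon.Quotient

def gen (p : H.V0 ⊕ H.V1) : H.GraphMonoid := H.relCon.mk' {p}

variable {H}

lemma relCon_of {v : H.V0} {Y : Set H.E} (hY : Y ∈ H.C v) :
    H.relCon {.inl v} (H.sourceSum Y.toFinite.toFinset.val) :=
  AddConGen.Rel.of _ _ ⟨v, Y, hY, rfl, rfl⟩

lemma mk_sourceSum_class {v : H.V0} {Y : Set H.E} (hY : Y ∈ H.C v) :
    H.relCon.mk' (H.sourceSum Y.toFinite.toFinset.val) = H.gen (.inl v) :=
  ((AddCon.eq _).2 (relCon_of hY)).symm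

lemma mk_map {α : Type*} (f : α → H.V0 ⊕ H.V1) (s : Multiset α) :
    H.relCon.mk' (s.map f) = (s.map fun a => H.gen (f a)).sum :=
  Multiset.addMonoidHom_apply_map _ f s

lemma sumMapAddMonoidHom_sourceSum {N : Type*} [AddCommMonoid N] (b : H.V0 ⊕ H.V1 → N)
    (Y : Set H.E) :
    Multiset.sumMapAddMonoidHom b (H.sourceSum Y.toFinite.toFinset.val) =
      ∑ᶠ e ∈ Y, b (.inr (H.s e)) := by
  rw [finsum_mem_eq_finite_toFinset_sum _ Y.toFinite, Finset.sum_eq_multiset_sum]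
  simp [sourceSum]

lemma bipRel_gen : BipRel H H.gen := by
  intro v Y hY
  rw [finsum_mem_eq_finite_toFinset_sum _ Y.toFinite, Finset.sum_eq_multiset_sum,
    ← mk_map (fun e => .inr (H.s e)), ← sourceSum_apply, mk_sourceSum_class hY]

variable (H) in
theorem isBipGraphMonoid_gen : IsBipGraphMonoid H H.gen := by
  refine ⟨bipRel_gen, fun N _ b hb => ?_⟩
  have hker : H.relCon ≤ AddCon.ker (Multiset.sumMapAddMonoidHom b) := by
    refine AddCon.addConGen_le.2 ?_
    rintro _ _ ⟨v, Y, hY, rfl, rfl⟩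
    rw [AddCon.ker_rel, sumMapAddMonoidHom_sourceSum, ← hb v Y hY]
    simp
  refine ⟨H.relCon.lift _ hker, fun p => by simp [gen], fun ψ hψ => AddCon.hom_ext ?_⟩
  refine Multiset.addHom_ext fun p => ?_
  simpa [gen] using hψ p

end Presentation

variable {G : BSG}

instance [Finite G.E] [Finite G.V0] : Finite G.NewVert := by
  unfold BSG.NewVert; infer_instance

instance [Finite G.E] [Finite G.V0] : Finite G.NewEdge := by
  unfold BSG.NewEdge; infer_instance

instance [Finite G.E] [Finite G.V0] : Finite G.next.E := inferInstanceAs (Finite G.NewEdge)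

lemma Valid.eq_of_mem_of_mem (hG : G.Valid) {u : G.V0} {X Y : Set G.E} (hX : X ∈ G.C u)
    (hY : Y ∈ G.C u) {y : G.E} (hyX : y ∈ X) (hyY : y ∈ Y) : X = Y := by
  by_contra hne
  exact Set.disjoint_left.1 (hG.disj u hX hY hne) hyX hyY

lemma Valid.choice_injective (hG : G.Valid) {u : G.V0}
    (t : (X : {X : Set G.E // X ∈ G.C u}) → ↥X.1) : Function.Injective fun X => (t X : G.E) :=
  fun X Y h => Subtype.ext <| hG.eq_of_mem_of_mem X.2 Y.2 (t X).2 <| by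
    rw [show (t X : G.E) = t Y from h]
    exact (t Y).2

/- The free monoid on `E₁⁰` is written over `G.V1 ⊕ G.NewVert` rather than
`G.next.V0 ⊕ G.next.V1`: the two agree only after unfolding `BSG.next`, which `rw` and `simp`
do not see. -/
variable (G) in
noncomputable def newVertSum : Multiset G.NewVert →+ Multiset (G.V1 ⊕ G.NewVert) :=
  Multiset.mapAddMonoidHom .inr

lemma newVertSum_apply (c : Multiset G.NewVert) : G.newVertSum c = c.map .inr := rfl

variable [Finite G.E] [Finite G.V0]

variable (G) in
noncomputable def nextMk : Multiset (G.V1 ⊕ G.NewVert) →+ G.next.GraphMonoid :=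
  G.next.relCon.mk'

variable (G) in
noncomputable def through (y : G.E) : Finset G.NewVert :=
  {p : G.NewVert | ∃ X, (p.2 X : G.E) = y}.toFinite.toFinset

variable (G) in
noncomputable def fiber (u : G.V0) : Finset G.NewVert :=
  {p : G.NewVert | p.1 = u}.toFinite.toFinset

variable (G) in
noncomputable def throughSum : Multiset G.E →+ Multiset G.NewVert :=
  Multiset.sumMapAddMonoidHom fun y => (G.through y).val

lemma mem_through {p : G.NewVert} {y : G.E} : p ∈ G.through y ↔ ∃ X, (p.2 X : G.E) = y := by
  simp [through]

lemma mem_fiber {p : G.NewVert} {u : G.V0} : p ∈ G.fiber u ↔ p.1 = u := by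
  simp [fiber]

lemma throughSum_apply (ν : Multiset G.E) :
    G.throughSum ν = ν.bind fun y => (G.through y).val := rfl

lemma throughSum_singleton (y : G.E) : G.throughSum {y} = (G.through y).val := by
  simp [throughSum]

lemma mem_throughSum {p : G.NewVert} {ν : Multiset G.E} :
    p ∈ G.throughSum ν ↔ ∃ y ∈ ν, p ∈ G.through y := by
  simp [throughSum_apply, Multiset.mem_bind]

lemma Valid.fst_eq_of_mem_through (hG : G.Valid) {p : G.NewVert} {y : G.E}
    (hp : p ∈ G.through y) : p.1 = G.r y := by
  obtain ⟨X, rfl⟩ := mem_through.1 hp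
  exact (hG.mem_r _ _ X.2 _ (p.2 X).2).symm

lemma Valid.mk_mem_through_iff (hG : G.Valid) {u : G.V0} {A : Set G.E} (hA : A ∈ G.C u)
    {y : G.E} (hy : y ∈ A) (t : (X : {X : Set G.E // X ∈ G.C u}) → ↥X.1) :
    ⟨u, t⟩ ∈ G.through y ↔ (t ⟨A, hA⟩ : G.E) = y := by
  refine ⟨fun h => ?_, fun h => mem_through.2 ⟨_, h⟩⟩
  obtain ⟨X, rfl⟩ := mem_through.1 h
  obtain rfl : X = ⟨A, hA⟩ := Subtype.ext (hG.eq_of_mem_of_mem X.2 hA (t X).2 hy)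
  rfl

lemma Valid.throughSum_class (hG : G.Valid) {u : G.V0} {A : Set G.E} (hA : A ∈ G.C u) :
    G.throughSum A.toFinite.toFinset.val = (G.fiber u).val := by
  have hfst : ∀ p : G.NewVert, ∀ y ∈ A, p ∈ G.through y → p.1 = u := fun p y hy hp =>
    (hG.fst_eq_of_mem_through hp).trans (hG.mem_r u A hA y hy)
  rw [Multiset.Nodup.ext _ (G.fiber u).nodup]
  · intro p
    simp only [mem_throughSum, Finset.mem_val, Set.Finite.mem_toFinset, mem_fiber]
    refine ⟨fun ⟨y, hy, hp⟩ => hfst p y hy hp, ?_⟩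
    obtain ⟨v, t⟩ := p
    rintro rfl
    exact ⟨t ⟨A, hA⟩, (t ⟨A, hA⟩).2, (hG.mk_mem_through_iff hA (t ⟨A, hA⟩).2 t).2 rfl⟩
  · rw [throughSum_apply]
    refine Multiset.nodup_bind.2 ⟨fun y _ => (G.through y).nodup, ?_⟩
    refine Multiset.Nodup.pairwise (fun y hy y' hy' hne => ?_) (Finset.nodup _)
    simp only [Finset.mem_val, Set.Finite.mem_toFinset] at hy hy'
    refine Finset.disjoint_val.2 (Finset.disjoint_left.2 fun p hp hp' => hne ?_)
    obtain ⟨v, t⟩ := p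
    obtain rfl := hfst _ y hy hp
    exact ((hG.mk_mem_through_iff hA hy t).1 hp).symm.trans
      ((hG.mk_mem_through_iff hA hy' t).1 hp')

lemma Valid.exists_mem_through (hG : G.Valid) (x : G.E) {Q : G.E → Prop}
    (hQ : ∀ B ∈ G.C (G.r x), x ∉ B → ∃ z ∈ B, Q z) :
    ∃ p ∈ G.through x, ∀ X, (p.2 X : G.E) = x ∨ Q (p.2 X) := by
  classical
  obtain ⟨X₀, hX₀, hx⟩ := hG.cover x
  choose z hzB hzQ using hQ
  let t : (X : {X : Set G.E // X ∈ G.C (G.r x)}) → ↥X.1 := fun X =>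
    if h : x ∈ X.1 then ⟨x, h⟩ else ⟨z X.1 X.2 h, hzB X.1 X.2 h⟩
  refine ⟨⟨G.r x, t⟩, mem_through.2 ⟨⟨X₀, hX₀⟩, by simp [t, hx]⟩, fun X => ?_⟩
  by_cases h : x ∈ X.1
  · left; simp [t, h]
  · right; simpa [t, h] using hzQ X.1 X.2 h

lemma Valid.through_nonempty (hG : G.Valid) (x : G.E) : (G.through x).Nonempty := by
  obtain ⟨p, hp, -⟩ := hG.exists_mem_through x (Q := fun _ => True)
    fun B hB _ => (hG.nonempty_class _ B hB).imp fun _ hz => ⟨hz, trivial⟩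
  exact ⟨p, hp⟩

lemma Valid.exists_class_subset_of_through_le (hG : G.Valid) {x : G.E} {ν : Multiset G.E}
    (hx : x ∉ ν) (hle : (G.through x).val ≤ G.throughSum ν) :
    ∃ B ∈ G.C (G.r x), x ∉ B ∧ ∀ z ∈ B, z ∈ ν := by
  by_contra! h
  obtain ⟨p, hp, hpν⟩ := hG.exists_mem_through x (Q := (· ∉ ν)) h
  obtain ⟨y, hy, hpy⟩ := mem_throughSum.1 (Multiset.mem_of_le hle hp)
  obtain ⟨X, rfl⟩ := mem_through.1 hpy
  exact (hpν X).elim (fun h => hx (h ▸ hy)) (· hy)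

lemma Valid.exists_mem_of_through_le (hG : G.Valid) {x : G.E} {ν : Multiset G.E}
    (hle : (G.through x).val ≤ G.throughSum ν) :
    ∃ ν', x ∈ ν' ∧ G.throughSum ν' = G.throughSum ν ∧
      G.relCon.mk' (G.sourceSum ν') = G.relCon.mk' (G.sourceSum ν) := by
  by_cases hx : x ∈ ν
  · exact ⟨ν, hx, rfl, rfl⟩
  obtain ⟨B, hB, -, hBν⟩ := hG.exists_class_subset_of_through_le hx hle
  obtain ⟨X, hX, hxX⟩ := hG.cover x
  have hBle : B.toFinite.toFinset.val ≤ ν :=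
    (Multiset.le_iff_subset (Finset.nodup _)).2 fun z hz => hBν z (by simpa using hz)
  obtain ⟨μ, rfl⟩ := exists_add_of_le hBle
  refine ⟨X.toFinite.toFinset.val + μ, Multiset.mem_add.2 (.inl (by simpa using hxX)), ?_, ?_⟩
  · rw [map_add, map_add, hG.throughSum_class hX, hG.throughSum_class hB]
  · rw [map_add, map_add, map_add, map_add, mk_sourceSum_class hX, mk_sourceSum_class hB]

lemma Valid.mk_sourceSum_eq_of_throughSum_eq (hG : G.Valid) {ν₁ ν₂ : Multiset G.E}
    (h : G.throughSum ν₁ = G.throughSum ν₂) :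
    G.relCon.mk' (G.sourceSum ν₁) = G.relCon.mk' (G.sourceSum ν₂) := by
  induction ν₁ using Multiset.induction_on generalizing ν₂ with
  | empty =>
    suffices ν₂ = 0 by rw [this]
    refine Multiset.eq_zero_of_forall_notMem fun y hy => ?_
    obtain ⟨p, hp⟩ := hG.through_nonempty y
    simpa [← h] using mem_throughSum.2 ⟨y, hy, hp⟩
  | cons y ν₁ ih =>
    rw [← Multiset.singleton_add, map_add, throughSum_singleton] at h
    obtain ⟨ν₂', hy, h', hmk⟩ := hG.exists_mem_of_through_le (h ▸ Multiset.le_add_right _ _)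
    obtain ⟨ν₂', rfl⟩ := Multiset.exists_cons_of_mem hy
    rw [← Multiset.singleton_add, map_add, throughSum_singleton, ← h] at h'
    rw [← hmk, ← Multiset.singleton_add, ← Multiset.singleton_add, map_add, map_add, map_add,
      map_add, ih (add_left_cancel h').symm]

/- Stated over `G.next.E` so that the left-hand side is literally the one occurring in the
generators of `G.next.relCon`. -/
lemma Valid.sourceSum_next_Xof (hG : G.Valid) (x : G.E) :
    G.next.sourceSum (Set.toFinite (α := G.next.E) (G.Xof x)).toFinset.val =
      G.newVertSum (G.through x).val := by
  classical
  have hinj : Set.InjOn (Sigma.fst : G.NewEdge → G.NewVert) (G.Xof x) := by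
    rintro ⟨p, X⟩ (hX : (p.2 X : G.E) = x) ⟨p', X'⟩ (hX' : (p'.2 X' : G.E) = x) (rfl : p = p')
    rw [hG.choice_injective p.2 (hX.trans hX'.symm)]
  have himage : (G.Xof x).toFinite.toFinset.image Sigma.fst = G.through x := by
    ext p
    rw [mem_through]
    constructor
    · intro hp
      obtain ⟨⟨q, X⟩, hX, rfl⟩ := Finset.mem_image.1 hp
      exact ⟨X, (G.Xof x).toFinite.mem_toFinset.1 hX⟩
    · rintro ⟨X, hX⟩
      exact Finset.mem_image.2 ⟨⟨p, X⟩, (G.Xof x).toFinite.mem_toFinset.2 hX, rfl⟩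
  have hval := Finset.image_val_of_injOn (f := (Sigma.fst : G.NewEdge → G.NewVert))
    (s := (G.Xof x).toFinite.toFinset) fun a ha b hb =>
      hinj ((G.Xof x).toFinite.mem_toFinset.1 ha) ((G.Xof x).toFinite.mem_toFinset.1 hb)
  show (G.Xof x).toFinite.toFinset.val.map (fun e : G.NewEdge => (.inr e.1 : G.V1 ⊕ G.NewVert))
    = (G.through x).val.map .inr
  rw [← himage, hval, Multiset.map_map]
  rfl

lemma Valid.nextMk_newVertSum_through (hG : G.Valid) (x : G.E) :
    G.nextMk (G.newVertSum (G.through x).val) = G.nextMk {.inl (G.s x)} := by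
  have h := relCon_of (H := G.next) (v := G.s x) (Y := G.Xof x) ⟨x, rfl, rfl⟩
  rw [hG.sourceSum_next_Xof] at h
  exact ((AddCon.eq _).2 h).symm

lemma Valid.nextMk_newVertSum_throughSum (hG : G.Valid) (ν : Multiset G.E) :
    G.nextMk (G.newVertSum (G.throughSum ν)) = G.nextMk (ν.map fun y => .inl (G.s y)) := by
  induction ν using Multiset.induction_on with
  | empty => simp
  | cons y ν ih =>
    rw [← Multiset.singleton_add, map_add, map_add, Multiset.map_add, map_add, map_add,
      ih, throughSum_singleton, Multiset.map_singleton, hG.nextMk_newVertSum_through]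

variable (G) in
noncomputable def nextFreeHom : G.FreeMon →+ Multiset (G.V1 ⊕ G.NewVert) :=
  Multiset.sumMapAddMonoidHom <|
    Sum.elim (fun u => G.newVertSum (G.fiber u).val) fun w => {.inl w}

@[simp]
lemma nextFreeHom_inl (u : G.V0) : G.nextFreeHom {.inl u} = G.newVertSum (G.fiber u).val := by
  simp [nextFreeHom]

@[simp]
lemma nextFreeHom_inr (w : G.V1) : G.nextFreeHom {.inr w} = {.inl w} := by
  simp [nextFreeHom]

lemma nextFreeHom_sourceSum (ν : Multiset G.E) :
    G.nextFreeHom (G.sourceSum ν) = ν.map fun y => .inl (G.s y) := by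
  simp only [nextFreeHom, sourceSum_apply, Multiset.sumMapAddMonoidHom_apply, Multiset.map_map,
    Function.comp_def, Sum.elim_inr]
  exact Multiset.bind_singleton ν _

lemma Valid.relCon_le_ker (hG : G.Valid) :
    G.relCon ≤ AddCon.ker (G.nextMk.comp G.nextFreeHom) := by
  refine AddCon.addConGen_le.2 ?_
  rintro _ _ ⟨v, Y, hY, rfl, rfl⟩
  rw [AddCon.ker_rel, AddMonoidHom.comp_apply, AddMonoidHom.comp_apply, nextFreeHom_inl,
    nextFreeHom_sourceSum, ← hG.throughSum_class hY, hG.nextMk_newVertSum_throughSum]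

variable (G) in
noncomputable def iota (hG : G.Valid) : G.GraphMonoid →+ G.next.GraphMonoid :=
  G.relCon.lift _ hG.relCon_le_ker

lemma iota_mk (hG : G.Valid) (f : G.FreeMon) :
    G.iota hG (G.relCon.mk' f) = G.nextMk (G.nextFreeHom f) :=
  AddCon.lift_mk' _ _

lemma iota_gen_inl (hG : G.Valid) (u : G.V0) :
    G.iota hG (G.gen (.inl u)) =
      ∑ᶠ t : ((X : {X : Set G.E // X ∈ G.C u}) → ↥X.1), G.next.gen (.inr ⟨u, t⟩) := by
  have hrange := finsum_mem_range (f := fun p : G.NewVert => G.nextMk {.inr p})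
    (g := Sigma.mk u) sigma_mk_injective
  have hset : (Set.range (Sigma.mk u) : Set G.NewVert) = {p | p.1 = u} := Set.range_sigmaMk u
  rw [hset] at hrange
  rw [gen, iota_mk, nextFreeHom_inl, newVertSum_apply, Multiset.addMonoidHom_apply_map,
    ← Finset.sum_eq_multiset_sum, fiber, ← finsum_mem_eq_finite_toFinset_sum]
  exact hrange

lemma iota_gen_inr (hG : G.Valid) (w : G.V1) :
    G.iota hG (G.gen (.inr w)) = G.next.gen (.inl w) := by
  rw [gen, iota_mk, nextFreeHom_inr]
  rfl

/- `g = β + Σ_{y ∈ ν} Σ_{p ∋ y} a_p`, where `β` is the `E^{0,1}`-part of `g`, and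
`m = β + Σ_{y ∈ ν} a_{s(y)}`. -/
variable (G) in
def Represents (g : Multiset (G.V1 ⊕ G.NewVert)) (m : G.GraphMonoid) : Prop :=
  ∃ ν, G.throughSum ν = g.filterMap Sum.getRight? ∧
    m = G.relCon.mk' ((g.filterMap Sum.getLeft?).map .inr + G.sourceSum ν)

lemma Represents.add {g g' : Multiset (G.V1 ⊕ G.NewVert)} {m m' : G.GraphMonoid}
    (h : G.Represents g m) (h' : G.Represents g' m') : G.Represents (g + g') (m + m') := by
  obtain ⟨ν, hν, rfl⟩ := h
  obtain ⟨ν', hν', rfl⟩ := h'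
  refine ⟨ν + ν', by rw [map_add, hν, hν', Multiset.filterMap_add], ?_⟩
  rw [Multiset.filterMap_add, Multiset.map_add, map_add G.sourceSum, add_add_add_comm]
  exact (map_add _ _ _).symm

lemma Valid.represents_nextFreeHom (hG : G.Valid) (f : G.FreeMon) :
    G.Represents (G.nextFreeHom f) (G.relCon.mk' f) := by
  induction f using Multiset.induction_on with
  | empty => exact ⟨0, by simp, by simp⟩
  | cons p f ih =>
    rw [← Multiset.singleton_add, map_add, map_add]
    refine Represents.add ?_ ih
    rcases p with u | w
    · obtain ⟨A, hA⟩ := hG.C_nonempty u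
      refine ⟨A.toFinite.toFinset.val, ?_, ?_⟩
      · rw [hG.throughSum_class hA, nextFreeHom_inl, newVertSum_apply]
        simp
      · rw [nextFreeHom_inl, newVertSum_apply]
        simp [mk_sourceSum_class hA, gen]
    · exact ⟨0, by simp, by simp⟩

lemma Valid.represents_unique (hG : G.Valid) {g : Multiset (G.V1 ⊕ G.NewVert)}
    {m m' : G.GraphMonoid} (h : G.Represents g m) (h' : G.Represents g m') : m = m' := by
  obtain ⟨ν, hν, rfl⟩ := h
  obtain ⟨ν', hν', rfl⟩ := h'
  rw [map_add, map_add, hG.mk_sourceSum_eq_of_throughSum_eq (hν.trans hν'.symm)]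

lemma Valid.represents_add_inl_iff (hG : G.Valid) (g : Multiset (G.V1 ⊕ G.NewVert)) (x : G.E)
    (m : G.GraphMonoid) :
    G.Represents (g + {.inl (G.s x)}) m ↔ G.Represents (g + G.newVertSum (G.through x).val) m := by
  simp only [Represents, newVertSum_apply, Multiset.filterMap_add,
    Multiset.filterMap_getLeft?_singleton_inl, Multiset.filterMap_getRight?_singleton_inl,
    Multiset.filterMap_getLeft?_map_inr, Multiset.filterMap_getRight?_map_inr, add_zero]
  constructor
  · rintro ⟨ν, hν, rfl⟩
    refine ⟨x ::ₘ ν, ?_, ?_⟩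
    · rw [← Multiset.singleton_add, map_add, throughSum_singleton, hν, add_comm]
    · rw [map_inr_add_sourceSum_cons]
  · rintro ⟨ν, hν, rfl⟩
    obtain ⟨ν', hx, h', hmk⟩ := hG.exists_mem_of_through_le (hν ▸ Multiset.le_add_left _ _)
    obtain ⟨ν', rfl⟩ := Multiset.exists_cons_of_mem hx
    refine ⟨ν', ?_, ?_⟩
    · rw [← Multiset.singleton_add, map_add, throughSum_singleton, hν, add_comm] at h'
      exact add_right_cancel h'
    · rw [map_add, ← hmk, ← map_add, map_inr_add_sourceSum_cons]

/- The largest congruence along which `Represents` is invariant. -/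
variable (G) in
def representsCon : AddCon (Multiset (G.V1 ⊕ G.NewVert)) where
  r g g' := ∀ z m, G.Represents (g + z) m ↔ G.Represents (g' + z) m
  iseqv := ⟨fun _ _ _ => .rfl, fun h z m => (h z m).symm, fun h h' z m => (h z m).trans (h' z m)⟩
  add' {a b c d} h h' z m := by
    calc G.Represents (a + c + z) m ↔ G.Represents (b + (c + z)) m := by
          rw [add_assoc]; exact h _ m
      _ ↔ G.Represents (c + (b + z)) m := by rw [add_left_comm]
      _ ↔ G.Represents (d + (b + z)) m := h' _ m
      _ ↔ G.Represents (b + d + z) m := by rw [add_left_comm, add_assoc]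

lemma Valid.relCon_next_le_representsCon (hG : G.Valid) : G.next.relCon ≤ G.representsCon := by
  refine AddCon.addConGen_le.2 ?_
  rintro _ _ ⟨w, Y, ⟨x, rfl, rfl⟩, rfl, rfl⟩ z m
  have h := hG.represents_add_inl_iff z x m
  rw [add_comm z, add_comm z, ← hG.sourceSum_next_Xof] at h
  exact h

theorem Valid.iota_injective (hG : G.Valid) : Function.Injective (G.iota hG) := by
  intro m m'
  refine AddCon.induction_on₂ m m' fun f f' h => ?_
  have hrel : G.next.relCon (G.nextFreeHom f) (G.nextFreeHom f') :=
    (AddCon.eq _).1 ((iota_mk hG f).symm.trans (h.trans (iota_mk hG f')))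
  have hf := hG.represents_nextFreeHom f
  rw [← add_zero (G.nextFreeHom f), hG.relCon_next_le_representsCon hrel, add_zero] at hf
  exact hG.represents_unique hf (hG.represents_nextFreeHom f')

end BSG

/-- Lemma 4.2(b): the assignment `a_u ↦ Σ_{(x₁,…,x_{k_u})} a_{v(x₁,…,x_{k_u})}` for
`u ∈ E_n^{0,0}` and `a_w ↦ a_w` for `w ∈ E_n^{0,1}` extends to a well-defined
injective monoid homomorphism `ι_n : M(E_n,C^n) → M(E_{n+1},C^{n+1})`. -/
theorem stmt15 (G : BSG) (hG : G.Valid)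
    {M0 M1 : Type} [AddCommMonoid M0] [AddCommMonoid M1]
    (a0 : G.V0 ⊕ G.V1 → M0) (h0 : IsBipGraphMonoid G a0)
    (a1 : G.next.V0 ⊕ G.next.V1 → M1) (h1 : IsBipGraphMonoid G.next a1) :
    ∃ φ : M0 →+ M1,
      (∀ u : G.V0, φ (a0 (Sum.inl u)) =
        ∑ᶠ t : ((X : {X : Set G.E // X ∈ G.C u}) → ↥X.1),
          a1 (Sum.inr (⟨u, t⟩ : G.NewVert))) ∧
      (∀ w : G.V1, φ (a0 (Sum.inr w)) = a1 (Sum.inl w)) ∧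
      Function.Injective φ := by
  have := hG.finE
  have := hG.finV0
  obtain ⟨e₀, he₀⟩ := h0.exists_addEquiv (BSG.isBipGraphMonoid_gen G)
  obtain ⟨e₁, he₁⟩ := (BSG.isBipGraphMonoid_gen G.next).exists_addEquiv h1
  refine ⟨e₁.toAddMonoidHom.comp ((G.iota hG).comp e₀.toAddMonoidHom), fun u => ?_, fun w => ?_,
    e₁.injective.comp (hG.iota_injective.comp e₀.injective)⟩
  · simp [he₀, BSG.iota_gen_inl, AddEquiv.map_finsum, he₁]
  · simp [he₀, BSG.iota_gen_inr, he₁]
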